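/- arXiv:0812.1660 — 3 statements merged into one kernel-verified Lean document; each statement's English description precedes it below -/
import Mathlib

section
/- Fix U ∈ ℝ with U ≠ 0 and k > 0 with k³ + k² − U² > 0. Set Q = √(k(k³ + k² − U²)) (the real square root), ω_± = (U ± Q)/(1 + 1/k), and c̃_± = ±(ω_∓² − k⁴)/(ω_−² − ω_+²). Then for every t ∈ ℝ, |c̃_−·exp(−i ω_− t) + c̃_+·exp(−i ω_+ t)|² = |cos(kQt/(1+k)) − (i/(2k))·(Q/U + k²U/Q)·sin(kQt/(1+k))|². -/
/-!
Both frequencies share the mean `φ = kU/(1+k)` and differ from it by `±θ` with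
`θ = kQ/(1+k)`, so the superposition is `e^{-iφt}` times `(c̃₋ + c̃₊) cos θt + i (c̃₋ - c̃₊) sin θt`
and the unimodular phase drops out of the modulus. The relation `Q² = k(k³ + k² - U²)` then
gives `c̃₋ + c̃₊ = 1` and `c̃₋ - c̃₊ = -(Q/U + k²U/Q)/(2k)`.
-/

open Complex

theorem mul_exp_add_mul_exp_eq (a b ω₁ ω₂ t : ℂ) :
    a * exp (-I * ω₁ * t) + b * exp (-I * ω₂ * t)
      = exp (-I * ((ω₁ + ω₂) * t / 2))
        * ((a + b) * cos ((ω₂ - ω₁) * t / 2) + I * (a - b) * sin ((ω₂ - ω₁) * t / 2)) := by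
  set φ := (ω₁ + ω₂) * t / 2
  set θ := (ω₂ - ω₁) * t / 2
  have h₁ : -I * ω₁ * t = -I * φ + θ * I := by ring
  have h₂ : -I * ω₂ * t = -I * φ + -θ * I := by ring
  rw [h₁, h₂, exp_add, exp_add, exp_mul_I, exp_mul_I, cos_neg, sin_neg]
  ring

theorem norm_ofReal_mul_exp_add_ofReal_mul_exp (a b ω₁ ω₂ t : ℝ) :
    ‖(a : ℂ) * exp (-I * ω₁ * t) + (b : ℂ) * exp (-I * ω₂ * t)‖
      = ‖((a + b : ℝ) : ℂ) * Real.cos ((ω₂ - ω₁) * t / 2)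
          + I * ((a - b : ℝ) : ℂ) * Real.sin ((ω₂ - ω₁) * t / 2)‖ := by
  have hphase : ‖exp (-I * (((ω₁ + ω₂) * t / 2 : ℝ) : ℂ))‖ = 1 := by
    rw [neg_mul, ← mul_neg, mul_comm, ← ofReal_neg, norm_exp_ofReal_mul_I]
  rw [mul_exp_add_mul_exp_eq]
  push_cast at hphase ⊢
  rw [norm_mul, hphase, one_mul]

theorem neg_div_add_div_eq_one {x y c : ℝ} (h : x ≠ y) :
    -((y - c) / (x - y)) + (x - c) / (x - y) = 1 := by
  field_simp [sub_ne_zero.mpr h]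
  ring

section DispersionRoots

variable {U k Q : ℝ}

theorem div_one_add_one_div (hk : k ≠ 0) (a : ℝ) : a / (1 + 1 / k) = k * a / (1 + k) := by
  rw [one_add_div hk, div_div_eq_mul_div, mul_comm, add_comm k]

theorem dispersion_roots_sq_sub (A : ℝ) :
    ((U - Q) / A) ^ 2 - ((U + Q) / A) ^ 2 = -(4 * U * Q) / A ^ 2 := by
  ring

theorem dispersion_coeff_sub (hk : 0 < k) (hU : U ≠ 0) (hQ : Q ≠ 0)
    (hQsq : Q ^ 2 = k * (k ^ 3 + k ^ 2 - U ^ 2)) :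
    -((((U + Q) / (1 + 1 / k)) ^ 2 - k ^ 4)
        / (((U - Q) / (1 + 1 / k)) ^ 2 - ((U + Q) / (1 + 1 / k)) ^ 2))
      - (((U - Q) / (1 + 1 / k)) ^ 2 - k ^ 4)
        / (((U - Q) / (1 + 1 / k)) ^ 2 - ((U + Q) / (1 + 1 / k)) ^ 2)
      = -((Q / U + k ^ 2 * U / Q) / (2 * k)) := by
  rw [dispersion_roots_sq_sub]
  field_simp
  linear_combination (4 * (1 + k)) * hQsq

end DispersionRoots

/-- With `Q = √(k(k³+k²−U²))`, `ω± = (U±Q)/(1+1/k)` and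
`c̃± = ±(ω∓²−k⁴)/(ω₋²−ω₊²)`, for every `t`,
`|c̃₋e^{−iω₋t} + c̃₊e^{−iω₊t}|² = |cos(kQt/(1+k)) − (i/(2k))(Q/U + k²U/Q)sin(kQt/(1+k))|²`. -/
theorem full_line_amplitude_identity (U k : ℝ) (hU : U ≠ 0) (hk : 0 < k)
    (hpos : 0 < k ^ 3 + k ^ 2 - U ^ 2)
    (Q ωp ωm cp cm : ℝ)
    (hQ : Q = Real.sqrt (k * (k ^ 3 + k ^ 2 - U ^ 2)))
    (hωp : ωp = (U + Q) / (1 + 1 / k)) (hωm : ωm = (U - Q) / (1 + 1 / k))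
    (hcp : cp = (ωm ^ 2 - k ^ 4) / (ωm ^ 2 - ωp ^ 2))
    (hcm : cm = -((ωp ^ 2 - k ^ 4) / (ωm ^ 2 - ωp ^ 2))) :
    ∀ t : ℝ,
      (‖(cm : ℂ) * Complex.exp (-Complex.I * (ωm : ℂ) * (t : ℂ))
          + (cp : ℂ) * Complex.exp (-Complex.I * (ωp : ℂ) * (t : ℂ))‖) ^ 2
      = (‖(Real.cos (k * Q * t / (1 + k)) : ℂ)
          - Complex.I / (2 * (k : ℂ)) * ((Q / U + k ^ 2 * U / Q : ℝ) : ℂ)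
            * (Real.sin (k * Q * t / (1 + k)) : ℂ)‖) ^ 2 := by
  intro t
  have hQpos : 0 < Q := hQ ▸ Real.sqrt_pos.mpr (by positivity)
  have hQsq : Q ^ 2 = k * (k ^ 3 + k ^ 2 - U ^ 2) := hQ ▸ Real.sq_sqrt (by positivity)
  have hroots : ωm ^ 2 ≠ ωp ^ 2 := by
    rw [← sub_ne_zero, hωm, hωp, dispersion_roots_sq_sub]
    exact div_ne_zero (by simp [hU, hQpos.ne']) (by positivity)
  have hsum : cm + cp = 1 := hcm ▸ hcp ▸ neg_div_add_div_eq_one hroots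
  have hdiff : cm - cp = -((Q / U + k ^ 2 * U / Q) / (2 * k)) := by
    rw [hcm, hcp, hωm, hωp]
    exact dispersion_coeff_sub hk hU hQpos.ne' hQsq
  have hθ : (ωp - ωm) * t / 2 = k * Q * t / (1 + k) := by
    rw [hωp, hωm, div_one_add_one_div hk.ne', div_one_add_one_div hk.ne']
    ring
  rw [norm_ofReal_mul_exp_add_ofReal_mul_exp, hsum, hdiff, hθ]
  congr 2
  push_cast
  ring
end

section
/- Fix U ∈ ℝ with U ≠ 0 and fix t ≥ 0. Then there exists a constant C > 0 (depending on U and t) such that for every k > 0 with k⁴ + k³ − U²k ≠ 0, |c̃_−(k)·exp(−i ω_−(k) t) + c̃_+(k)·exp(−i ω_+(k) t)| ≤ C·(1 + k²), where S(k) is the principal complex square root of k⁴ + k³ − U²k, ω_±(k) = (U ± S(k))/(1 + 1/k), and c̃_±(k) = ±(ω_∓(k)² − k⁴)/(ω_−(k)² − ω_+(k)²). -/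
/-- The principal complex square root of `k⁴ + k³ − U²k`. -/
noncomputable def plateS (U k : ℝ) : ℂ :=
  ((k : ℂ) ^ 4 + (k : ℂ) ^ 3 - (U : ℂ) ^ 2 * (k : ℂ)) ^ ((1 : ℂ) / 2)

/-- The dispersion root `ω₊(k) = (U + S(k))/(1 + 1/k)`. -/
noncomputable def plateOmegaP (U k : ℝ) : ℂ := ((U : ℂ) + plateS U k) / (1 + 1 / (k : ℂ))

/-- The dispersion root `ω₋(k) = (U − S(k))/(1 + 1/k)`. -/
noncomputable def plateOmegaM (U k : ℝ) : ℂ := ((U : ℂ) - plateS U k) / (1 + 1 / (k : ℂ))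

/-- The normalised coefficient `c̃₊(k) = (ω₋(k)² − k⁴)/(ω₋(k)² − ω₊(k)²)`. -/
noncomputable def plateCP (U k : ℝ) : ℂ :=
  (plateOmegaM U k ^ 2 - (k : ℂ) ^ 4) / (plateOmegaM U k ^ 2 - plateOmegaP U k ^ 2)

/-- The normalised coefficient `c̃₋(k) = −(ω₊(k)² − k⁴)/(ω₋(k)² − ω₊(k)²)`. -/
noncomputable def plateCM (U k : ℝ) : ℂ :=
  -((plateOmegaP U k ^ 2 - (k : ℂ) ^ 4) / (plateOmegaM U k ^ 2 - plateOmegaP U k ^ 2))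

/-! Write `A = 1 + 1/k`, so `ω± = (U ± S)/A`. Clearing denominators,
`c̃₋ x + c̃₊ y = (x + y)/2 + Q (x − y)/(4 U S)` with `Q = U² − k³ − k² − U²k`,
and the two exponentials differ by the factor `exp (2 i S t / A)`.
For `k ≥ max 1 |U|` the radicand is at least `k⁴`, so `S` is real with `|S| ≥ k²`, both
exponentials are unimodular and `|Q|/|S| = O(k)`. For bounded `k`, the estimate
`|e^z − 1| ≤ |z| e^|z|` at `z = 2 i S t / A` cancels the factor `1/S`, leaving a constant. -/

noncomputable def plateDisc (U k : ℝ) : ℝ := k ^ 4 + k ^ 3 - U ^ 2 * k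

noncomputable def plateQ (U k : ℝ) : ℝ := U ^ 2 - k ^ 3 - k ^ 2 - U ^ 2 * k

noncomputable def plateMultiplier (U t k : ℝ) : ℂ :=
  plateCM U k * Complex.exp (-Complex.I * plateOmegaM U k * (t : ℂ))
    + plateCP U k * Complex.exp (-Complex.I * plateOmegaP U k * (t : ℂ))

theorem neg_div_mul_add_div_mul_eq {F : Type*} [Field F] [CharZero F] {u s A : F}
    (hu : u ≠ 0) (hs : s ≠ 0) (hA : A ≠ 0) (κ x y : F) :
    -((((u + s) / A) ^ 2 - κ) / (((u - s) / A) ^ 2 - ((u + s) / A) ^ 2)) * x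
      + (((u - s) / A) ^ 2 - κ) / (((u - s) / A) ^ 2 - ((u + s) / A) ^ 2) * y
      = (x + y) / 2 + (u ^ 2 + s ^ 2 - κ * A ^ 2) * (x - y) / (4 * u * s) := by
  have hD : ((u - s) / A) ^ 2 - ((u + s) / A) ^ 2 = -(4 * u * s) / A ^ 2 := by ring
  rw [hD]
  field_simp
  ring

section Plate

variable {U k t : ℝ}

theorem plateS_eq_cpow (U k : ℝ) : plateS U k = (plateDisc U k : ℂ) ^ ((1 : ℂ) / 2) := by
  rw [plateS, plateDisc]
  push_cast
  rfl

theorem plateS_sq (U k : ℝ) : plateS U k ^ 2 = plateDisc U k := by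
  rw [plateS_eq_cpow, one_div, Complex.cpow_ofNat_inv_pow]

theorem plateS_ne_zero (hr : plateDisc U k ≠ 0) : plateS U k ≠ 0 :=
  (pow_ne_zero_iff two_ne_zero).1 (by rw [plateS_sq]; exact_mod_cast hr)

theorem norm_plateS_sq (U k : ℝ) : ‖plateS U k‖ ^ 2 = |plateDisc U k| := by
  rw [← norm_pow, plateS_sq, Complex.norm_real, Real.norm_eq_abs]

theorem plateS_im_eq_zero (hr : 0 ≤ plateDisc U k) : (plateS U k).im = 0 := by
  rw [plateS_eq_cpow, show (1 : ℂ) / 2 = ((1 / 2 : ℝ) : ℂ) by norm_num,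
    ← Complex.ofReal_cpow hr, Complex.ofReal_im]

theorem plateOmegaP_eq (U k : ℝ) :
    plateOmegaP U k = ((U : ℂ) + plateS U k) / ((1 + 1 / k : ℝ) : ℂ) := by
  rw [plateOmegaP]
  push_cast
  rfl

theorem plateOmegaM_eq (U k : ℝ) :
    plateOmegaM U k = ((U : ℂ) - plateS U k) / ((1 + 1 / k : ℝ) : ℂ) := by
  rw [plateOmegaM]
  push_cast
  rfl

theorem plateCM_mul_add_plateCP_mul (hU : U ≠ 0) (hk : 0 < k) (hr : plateDisc U k ≠ 0)
    (x y : ℂ) :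
    plateCM U k * x + plateCP U k * y
      = (x + y) / 2
        + (plateQ U k : ℂ) * (x - y) / (4 * U * plateS U k) := by
  have hk0 : (k : ℂ) ≠ 0 := by exact_mod_cast hk.ne'
  have hA : (1 : ℂ) + 1 / k ≠ 0 := by
    have : (0 : ℝ) < 1 + 1 / k := by positivity
    exact_mod_cast this.ne'
  rw [plateCM, plateCP, plateOmegaM, plateOmegaP,
    neg_div_mul_add_div_mul_eq (by exact_mod_cast hU) (plateS_ne_zero hr) hA, plateS_sq]
  congr 3
  rw [plateDisc, plateQ]
  field_simp
  push_cast
  ring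

theorem norm_exp_neg_I_mul_div_mul (w : ℂ) (A t : ℝ) :
    ‖Complex.exp (-Complex.I * (w / A) * t)‖ = Real.exp (w.im / A * t) := by
  rw [Complex.norm_exp]
  congr 1
  simp [Complex.mul_re, Complex.div_ofReal_im]

theorem norm_exp_plateOmegaP (U k t : ℝ) :
    ‖Complex.exp (-Complex.I * plateOmegaP U k * t)‖
      = Real.exp ((plateS U k).im / (1 + 1 / k) * t) := by
  rw [plateOmegaP_eq, norm_exp_neg_I_mul_div_mul]
  simp

theorem norm_exp_plateOmegaM (U k t : ℝ) :
    ‖Complex.exp (-Complex.I * plateOmegaM U k * t)‖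
      = Real.exp (-(plateS U k).im / (1 + 1 / k) * t) := by
  rw [plateOmegaM_eq, norm_exp_neg_I_mul_div_mul]
  simp

theorem exp_div_mul_le_exp_abs_mul {A : ℝ} (hA : 1 ≤ A) (ht : 0 ≤ t) (x : ℝ) :
    Real.exp (x / A * t) ≤ Real.exp (|x| * t) := by
  gcongr
  calc x / A ≤ |x| / A := by gcongr; exact le_abs_self x
    _ ≤ |x| := div_le_self (abs_nonneg x) hA

theorem exp_neg_I_mul_plateOmegaM (U k t : ℝ) :
    Complex.exp (-Complex.I * plateOmegaM U k * t)
      = Complex.exp (-Complex.I * plateOmegaP U k * t)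
        * Complex.exp (2 * Complex.I * plateS U k * ((t / (1 + 1 / k) : ℝ) : ℂ)) := by
  rw [← Complex.exp_add, plateOmegaM_eq, plateOmegaP_eq]
  congr 1
  push_cast
  ring

theorem norm_plateMultiplier_le (hU : U ≠ 0) (ht : 0 ≤ t) (hk : 0 < k)
    (hr : plateDisc U k ≠ 0) :
    ‖plateMultiplier U t k‖
      ≤ Real.exp (‖plateS U k‖ * t)
        + |plateQ U k| * t * Real.exp (3 * ‖plateS U k‖ * t) / (2 * |U|) := by
  set σ := ‖plateS U k‖
  have hσ : 0 < σ := norm_pos_iff.2 (plateS_ne_zero hr)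
  have hA : 1 ≤ 1 + 1 / k := le_add_of_nonneg_right (by positivity)
  have him : |(plateS U k).im| ≤ σ := Complex.abs_im_le_norm _
  have hEp : ‖Complex.exp (-Complex.I * plateOmegaP U k * t)‖ ≤ Real.exp (σ * t) := by
    rw [norm_exp_plateOmegaP]
    exact (exp_div_mul_le_exp_abs_mul hA ht _).trans (by gcongr)
  have hEm : ‖Complex.exp (-Complex.I * plateOmegaM U k * t)‖ ≤ Real.exp (σ * t) := by
    rw [norm_exp_plateOmegaM]
    exact (exp_div_mul_le_exp_abs_mul hA ht _).trans (by rw [abs_neg]; gcongr)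
  set z : ℂ := 2 * Complex.I * plateS U k * ((t / (1 + 1 / k) : ℝ) : ℂ)
  have hz : ‖z‖ ≤ 2 * σ * t := by
    have hτ : |t / (1 + 1 / k)| ≤ t := by
      rw [abs_of_nonneg (by positivity)]
      exact div_le_self ht hA
    simp only [z, norm_mul, Complex.norm_I, Complex.norm_real, Real.norm_eq_abs,
      Complex.norm_two, mul_one]
    gcongr
  have hdiff : ‖Complex.exp (-Complex.I * plateOmegaM U k * t)
      - Complex.exp (-Complex.I * plateOmegaP U k * t)‖
        ≤ Real.exp (σ * t) * (2 * σ * t * Real.exp (2 * σ * t)) := by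
    rw [exp_neg_I_mul_plateOmegaM, ← mul_sub_one, norm_mul]
    have hz1 : ‖Complex.exp z - 1‖ ≤ ‖z‖ * Real.exp ‖z‖ := by
      simpa using Complex.norm_exp_sub_sum_le_norm_mul_exp z 1
    gcongr
    exact hz1.trans (by gcongr)
  rw [plateMultiplier, plateCM_mul_add_plateCP_mul hU hk hr]
  calc _ ≤ (‖Complex.exp (-Complex.I * plateOmegaM U k * t)‖
          + ‖Complex.exp (-Complex.I * plateOmegaP U k * t)‖) / 2
        + |plateQ U k| * ‖Complex.exp (-Complex.I * plateOmegaM U k * t)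
          - Complex.exp (-Complex.I * plateOmegaP U k * t)‖ / (4 * |U| * σ) := by
        refine (norm_add_le _ _).trans (add_le_add ?_ (le_of_eq ?_))
        · rw [norm_div, Complex.norm_two]
          gcongr
          exact norm_add_le _ _
        · rw [norm_div, norm_mul, norm_mul, norm_mul, Complex.norm_real, Complex.norm_real,
            Real.norm_eq_abs, Real.norm_eq_abs, Complex.norm_ofNat]
    _ ≤ (Real.exp (σ * t) + Real.exp (σ * t)) / 2
        + |plateQ U k| * (Real.exp (σ * t) * (2 * σ * t * Real.exp (2 * σ * t)))
          / (4 * |U| * σ) := by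
        gcongr
    _ = _ := by
        rw [show 3 * σ * t = σ * t + 2 * σ * t by ring, Real.exp_add]
        field_simp
        ring

theorem norm_plateMultiplier_le_of_large (hU : U ≠ 0) (hk : max 1 |U| ≤ k) :
    ‖plateMultiplier U t k‖ ≤ (1 + 2 / |U|) * (1 + k ^ 2) := by
  have hk1 : 1 ≤ k := le_of_max_le_left hk
  have hk0 : 0 < k := one_pos.trans_le hk1
  have hUk : U ^ 2 ≤ k ^ 2 := sq_le_sq' (neg_le_of_abs_le (le_of_max_le_right hk))
    ((le_abs_self U).trans (le_of_max_le_right hk))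
  have hUk3 : U ^ 2 * k ≤ k ^ 3 := by nlinarith
  have hr : k ^ 4 ≤ plateDisc U k := by rw [plateDisc]; linarith
  have hr0 : 0 < plateDisc U k := (pow_pos hk0 4).trans_le hr
  have him := plateS_im_eq_zero hr0.le
  have hσ : k ^ 2 ≤ ‖plateS U k‖ := by
    refine (pow_le_pow_iff_left₀ (by positivity) (norm_nonneg _) two_ne_zero).1 ?_
    rw [norm_plateS_sq, abs_of_pos hr0]
    linarith
  have hQ : |plateQ U k| ≤ 3 * k ^ 3 := by
    rw [plateQ, abs_le]
    constructor <;> nlinarith [sq_nonneg U]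
  have hEm : ‖Complex.exp (-Complex.I * plateOmegaM U k * t)‖ = 1 := by
    rw [norm_exp_plateOmegaM, him]
    simp
  have hEp : ‖Complex.exp (-Complex.I * plateOmegaP U k * t)‖ = 1 := by
    rw [norm_exp_plateOmegaP, him]
    simp
  rw [plateMultiplier, plateCM_mul_add_plateCP_mul hU hk0 hr0.ne']
  have hUpos : 0 < |U| := abs_pos.2 hU
  calc _ ≤ (1 + 1) / 2 + 3 * k ^ 3 * (1 + 1) / (4 * |U| * k ^ 2) := by
        refine (norm_add_le _ _).trans (add_le_add ?_ ?_)
        · rw [norm_div, Complex.norm_two]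
          gcongr
          exact (norm_add_le _ _).trans (by rw [hEm, hEp])
        · rw [norm_div, norm_mul, norm_mul, norm_mul, Complex.norm_real, Complex.norm_real,
            Real.norm_eq_abs, Real.norm_eq_abs, Complex.norm_ofNat]
          gcongr
          exact (norm_sub_le _ _).trans (by rw [hEm, hEp])
    _ = 1 + 3 / (2 * |U|) * k := by field_simp; ring
    _ ≤ (1 + 2 / |U|) * (1 + k ^ 2) := by
        have : 3 / (2 * |U|) ≤ 2 / |U| := by
          rw [div_le_div_iff₀ (by positivity) hUpos]; linarith
        nlinarith [sq_nonneg (k - 1), div_pos two_pos hUpos]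

theorem norm_plateS_le_of_le {K : ℝ} (hk : 0 < k) (hkK : k ≤ K) :
    ‖plateS U k‖ ≤ 1 + K ^ 4 + K ^ 3 + U ^ 2 * K := by
  have hdisc : |plateDisc U k| ≤ K ^ 4 + K ^ 3 + U ^ 2 * K := by
    rw [plateDisc, abs_le]
    have : U ^ 2 * k ≤ U ^ 2 * K := by gcongr
    constructor <;> nlinarith [pow_le_pow_left₀ hk.le hkK 4, pow_le_pow_left₀ hk.le hkK 3,
      pow_pos hk 3, pow_pos hk 4, sq_nonneg U, mul_nonneg (sq_nonneg U) hk.le]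
  nlinarith [norm_plateS_sq U k, sq_nonneg (‖plateS U k‖ - 1)]

theorem abs_plateQ_le_of_le {K : ℝ} (hk : 0 < k) (hkK : k ≤ K) :
    |plateQ U k| ≤ U ^ 2 + K ^ 3 + K ^ 2 + U ^ 2 * K := by
  have : U ^ 2 * k ≤ U ^ 2 * K := by gcongr
  rw [plateQ, abs_le]
  constructor <;> nlinarith [pow_le_pow_left₀ hk.le hkK 3, pow_le_pow_left₀ hk.le hkK 2,
    pow_pos hk 3, pow_pos hk 2, sq_nonneg U, mul_nonneg (sq_nonneg U) hk.le]

theorem norm_plateMultiplier_le_of_le {K : ℝ} (hU : U ≠ 0) (ht : 0 ≤ t) (hk : 0 < k)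
    (hkK : k ≤ K) (hr : plateDisc U k ≠ 0) :
    ‖plateMultiplier U t k‖
      ≤ Real.exp ((1 + K ^ 4 + K ^ 3 + U ^ 2 * K) * t)
        + (U ^ 2 + K ^ 3 + K ^ 2 + U ^ 2 * K) * t
          * Real.exp (3 * (1 + K ^ 4 + K ^ 3 + U ^ 2 * K) * t) / (2 * |U|) := by
  have hσ := norm_plateS_le_of_le (U := U) hk hkK
  have hQ := abs_plateQ_le_of_le (U := U) hk hkK
  have hPt : 0 ≤ (U ^ 2 + K ^ 3 + K ^ 2 + U ^ 2 * K) * t :=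
    mul_nonneg ((abs_nonneg _).trans hQ) ht
  calc _ ≤ _ := norm_plateMultiplier_le hU ht hk hr
    _ ≤ _ := by gcongr

end Plate

/-- uniform polynomial bound `|c̃₋e^{−iω₋t} + c̃₊e^{−iω₊t}| ≤ C(1+k²)`
for all `k > 0` with `k⁴+k³−U²k ≠ 0`. -/
theorem full_line_uniform_bound (U : ℝ) (hU : U ≠ 0) (t : ℝ) (ht : 0 ≤ t) :
    ∃ C : ℝ, 0 < C ∧ ∀ k : ℝ, 0 < k → k ^ 4 + k ^ 3 - U ^ 2 * k ≠ 0 →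
      ‖plateCM U k * Complex.exp (-Complex.I * plateOmegaM U k * (t : ℂ))
          + plateCP U k * Complex.exp (-Complex.I * plateOmegaP U k * (t : ℂ))‖
        ≤ C * (1 + k ^ 2) := by
  set K := max 1 |U|
  set R := 1 + K ^ 4 + K ^ 3 + U ^ 2 * K
  set C₀ := Real.exp (R * t) + (U ^ 2 + K ^ 3 + K ^ 2 + U ^ 2 * K) * t
    * Real.exp (3 * R * t) / (2 * |U|)
  have hC₀ : 0 < C₀ := by positivity
  refine ⟨(1 + 2 / |U|) + C₀, by positivity, fun k hk hr => ?_⟩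
  change ‖plateMultiplier U t k‖ ≤ _
  rcases le_total k K with hkK | hKk
  · calc _ ≤ C₀ := norm_plateMultiplier_le_of_le hU ht hk hkK hr
      _ ≤ C₀ * (1 + k ^ 2) := le_mul_of_one_le_right hC₀.le (le_add_of_nonneg_right (sq_nonneg k))
      _ ≤ ((1 + 2 / |U|) + C₀) * (1 + k ^ 2) := by
        gcongr ?_ * _
        exact le_add_of_nonneg_left (by positivity)
  · calc _ ≤ (1 + 2 / |U|) * (1 + k ^ 2) := norm_plateMultiplier_le_of_large hU hKk
      _ ≤ ((1 + 2 / |U|) + C₀) * (1 + k ^ 2) := by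
        gcongr ?_ * _
        exact le_add_of_nonneg_right hC₀.le
end

section
/- Fix U ∈ ℝ. For real k large enough that k⁴ + k³ − U²k > 0 and k > 0, define ω_+(k) = (U + √(k⁴ + k³ − U²k))/(1 + 1/k), with the real square root. Then ω_+(k) − k² + k/2 converges to U + 3/8 as k → ∞; that is, ω_+(k) = k² − k/2 + (U + 3/8) + o(1) as k → ∞. -/
open Filter Real

/-- the asymptotic expansion `ω₊(k) = k² − k/2 + (U + 3/8) + o(1)` as
`k → ∞`, where `ω₊(k) = (U + √(k⁴+k³−U²k))/(1+1/k)` with the real square root. -/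
theorem omega_plus_asymptotics (U : ℝ) :
    Filter.Tendsto
      (fun k : ℝ => (U + Real.sqrt (k ^ 4 + k ^ 3 - U ^ 2 * k)) / (1 + 1 / k) - k ^ 2 + k / 2)
      Filter.atTop (nhds (U + 3 / 8)) := by
  have hinv : Tendsto (fun k : ℝ => 1 / k) atTop (nhds 0) := by
    simpa [one_div] using tendsto_inv_atTop_zero (𝕜 := ℝ)
  set S : ℝ → ℝ := fun k => Real.sqrt (k ^ 4 + k ^ 3 - U ^ 2 * k) with hSdef
  -- S k / k^2 → 1
  have hu : Tendsto (fun k => S k / k ^ 2) atTop (nhds 1) := by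
    have h3 : Tendsto (fun k : ℝ => U ^ 2 / k ^ 3) atTop (nhds 0) :=
      Tendsto.div_atTop tendsto_const_nhds (tendsto_pow_atTop (by norm_num))
    have hin : Tendsto (fun k : ℝ => 1 + 1 / k - U ^ 2 / k ^ 3) atTop (nhds 1) := by
      have h0 : Tendsto (fun _ : ℝ => (1:ℝ)) atTop (nhds 1) := tendsto_const_nhds
      have := (h0.add hinv).sub h3
      simpa using this
    have hc : Tendsto (fun k : ℝ => Real.sqrt (1 + 1 / k - U ^ 2 / k ^ 3)) atTop (nhds 1) := by
      have := (Real.continuous_sqrt.tendsto 1).comp hin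
      simpa only [Function.comp_def, Real.sqrt_one] using this
    refine Tendsto.congr' ?_ hc
    filter_upwards [eventually_gt_atTop 0] with k hk
    have h4 : k ^ 4 + k ^ 3 - U ^ 2 * k = k ^ 4 * (1 + 1 / k - U ^ 2 / k ^ 3) := by
      field_simp
    have h5 : Real.sqrt (k ^ 4) = k ^ 2 := by
      rw [show (k:ℝ) ^ 4 = (k ^ 2) ^ 2 by ring, Real.sqrt_sq (by positivity)]
    have h6 : S k = k ^ 2 * Real.sqrt (1 + 1 / k - U ^ 2 / k ^ 3) := by
      rw [hSdef]
      simp only []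
      rw [h4, Real.sqrt_mul (by positivity : (0:ℝ) ≤ k ^ 4), h5]
    show Real.sqrt (1 + 1 / k - U ^ 2 / k ^ 3) = S k / k ^ 2
    rw [h6, mul_comm, mul_div_assoc, div_self (by positivity : (k:ℝ) ^ 2 ≠ 0), mul_one]
  -- T k / k^3 → 1  where T k = k^3 + k^2/2 - k/2 - k*U
  have hv : Tendsto (fun k : ℝ => (k ^ 3 + k ^ 2 / 2 - k / 2 - k * U) / k ^ 3) atTop (nhds 1) := by
    have hφ : Tendsto (fun k : ℝ => 1 + (1 / k) / 2 - (1 / k) ^ 2 / 2 - U * (1 / k) ^ 2)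
        atTop (nhds (1 + 0 / 2 - 0 ^ 2 / 2 - U * 0 ^ 2)) := by
      exact ((tendsto_const_nhds.add (hinv.div_const 2)).sub ((hinv.pow 2).div_const 2)).sub
        ((hinv.pow 2).const_mul U)
    refine Tendsto.congr' ?_ (by simpa using hφ)
    filter_upwards [eventually_gt_atTop 0] with k hk
    field_simp
  -- numerator over k^4 → 3/4 + 2U
  have hn : Tendsto (fun k : ℝ =>
      ((3 / 4 + 2 * U) * k ^ 4 + (1 / 2 + U - U ^ 2) * k ^ 3 - (1 / 2 + U) ^ 2 * k ^ 2) / k ^ 4)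
      atTop (nhds (3 / 4 + 2 * U)) := by
    have hφ : Tendsto (fun k : ℝ => (3 / 4 + 2 * U) + (1 / 2 + U - U ^ 2) * (1 / k)
        - (1 / 2 + U) ^ 2 * (1 / k) ^ 2)
        atTop (nhds ((3 / 4 + 2 * U) + (1 / 2 + U - U ^ 2) * 0 - (1 / 2 + U) ^ 2 * 0 ^ 2)) := by
      exact (tendsto_const_nhds.add (hinv.const_mul _)).sub ((hinv.pow 2).const_mul _)
    refine Tendsto.congr' ?_ (by simpa using hφ)
    filter_upwards [eventually_gt_atTop 0] with k hk
    field_simp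
  -- denominator over k^4 → 2
  have hd : Tendsto (fun k : ℝ =>
      (S k / k ^ 2 + (k ^ 3 + k ^ 2 / 2 - k / 2 - k * U) / k ^ 3) * (1 + 1 / k))
      atTop (nhds 2) := by
    have h0 : Tendsto (fun _ : ℝ => (1:ℝ)) atTop (nhds 1) := tendsto_const_nhds
    have := (hu.add hv).mul (h0.add hinv)
    norm_num at this
    refine this.congr fun k => ?_
    rw [one_div]
  have hfrac := hn.div hd (by norm_num)
  have hfrac' : Tendsto
      ((fun k : ℝ =>
          ((3 / 4 + 2 * U) * k ^ 4 + (1 / 2 + U - U ^ 2) * k ^ 3 - (1 / 2 + U) ^ 2 * k ^ 2) / k ^ 4)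
        / fun k : ℝ =>
          (S k / k ^ 2 + (k ^ 3 + k ^ 2 / 2 - k / 2 - k * U) / k ^ 3) * (1 + 1 / k))
      atTop (nhds (U + 3 / 8)) := by
    rw [show (U + 3 / 8 : ℝ) = (3 / 4 + 2 * U) / 2 by ring]
    exact hfrac
  refine Tendsto.congr' ?_ hfrac'
  -- eventual equality
  filter_upwards [eventually_ge_atTop (1:ℝ), eventually_ge_atTop (U ^ 2),
    eventually_ge_atTop (2 * |U| + 2)] with k hk1 hkU2 hkU
  have hk0 : (0:ℝ) < k := lt_of_lt_of_le one_pos hk1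
  have hnn : (0:ℝ) ≤ k ^ 4 + k ^ 3 - U ^ 2 * k := by
    have h1 : U ^ 2 * k ≤ k * k := mul_le_mul_of_nonneg_right hkU2 hk0.le
    have h2 : k * k ≤ k ^ 3 := by nlinarith
    nlinarith [pow_nonneg hk0.le 4]
  have hSsq : S k ^ 2 = k ^ 4 + k ^ 3 - U ^ 2 * k := Real.sq_sqrt hnn
  have hSnn : 0 ≤ S k := Real.sqrt_nonneg _
  have habs : U ≤ |U| := le_abs_self U
  have hT : (0:ℝ) < k ^ 3 + k ^ 2 / 2 - k / 2 - k * U := by nlinarith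
  have hden : (0:ℝ) < k * S k + (k ^ 3 + k ^ 2 / 2 - k / 2 - k * U) := by nlinarith
  have hk1' : (0:ℝ) < k + 1 := by linarith
  have hik : (0:ℝ) < 1 + 1 / k := by positivity
  have e1 : ((3 / 4 + 2 * U) * k ^ 4 + (1 / 2 + U - U ^ 2) * k ^ 3 - (1 / 2 + U) ^ 2 * k ^ 2) / k ^ 4
      / ((S k / k ^ 2 + (k ^ 3 + k ^ 2 / 2 - k / 2 - k * U) / k ^ 3) * (1 + 1 / k))
      = ((3 / 4 + 2 * U) * k ^ 4 + (1 / 2 + U - U ^ 2) * k ^ 3 - (1 / 2 + U) ^ 2 * k ^ 2)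
        / ((k * S k + (k ^ 3 + k ^ 2 / 2 - k / 2 - k * U)) * (k + 1)) := by
    have hD : (0:ℝ) < (S k / k ^ 2 + (k ^ 3 + k ^ 2 / 2 - k / 2 - k * U) / k ^ 3) * (1 + 1 / k) :=
      mul_pos (add_pos_of_nonneg_of_pos (div_nonneg hSnn (by positivity)) (by positivity)) hik
    rw [div_div, div_eq_div_iff (by positivity) (by positivity)]
    field_simp
  have e2 : ((3 / 4 + 2 * U) * k ^ 4 + (1 / 2 + U - U ^ 2) * k ^ 3 - (1 / 2 + U) ^ 2 * k ^ 2)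
        / ((k * S k + (k ^ 3 + k ^ 2 / 2 - k / 2 - k * U)) * (k + 1))
      = (k * S k - (k ^ 3 + k ^ 2 / 2 - k / 2 - k * U)) / (k + 1) := by
    rw [div_eq_div_iff (by positivity) (by linarith)]
    linear_combination (-((k + 1) * k ^ 2)) * hSsq
  have e3 : (k * S k - (k ^ 3 + k ^ 2 / 2 - k / 2 - k * U)) / (k + 1)
      = (U + S k) / (1 + 1 / k) - k ^ 2 + k / 2 := by
    have hkne : (k:ℝ) ≠ 0 := ne_of_gt hk0
    have h1 : (1:ℝ) + 1 / k ≠ 0 := ne_of_gt hik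
    have h2 : (k:ℝ) + 1 ≠ 0 := ne_of_gt hk1'
    field_simp
    ring
  show _ = (U + S k) / (1 + 1 / k) - k ^ 2 + k / 2
  simp only [Pi.div_apply]
  rw [e1, e2, e3]
end
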